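/- For every i ∈ 𝔖, the set W_i is a closed subset of ℝ² of Lebesgue measure zero. -/

import Mathlib

open Filter

/-- Membership in the index set 𝔖: real sequences with `1 ≤ i r < N r` and `i r / N r → 0`. -/
def SSeq (N : ℕ → ℕ) (i : ℕ → ℝ) : Prop :=
  (∀ r, 1 ≤ i r ∧ i r < N r) ∧
  Tendsto (fun r => i r / (N r : ℝ)) atTop (nhds 0)

/-- The strict relation: `i ≺ j` iff `i r > j r` for all `r` and `i r / j r → ∞`. -/
def Prec (i j : ℕ → ℝ) : Prop :=
  (∀ r, i r > j r) ∧ Tendsto (fun r => i r / j r) atTop atTop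

/-- `i ≼ j` iff `i ≺ j` or `i = j`. -/
def Preceq (i j : ℕ → ℝ) : Prop := Prec i j ∨ i = j


/-- `dSeq N r = 1/(N_1 ⋯ N_r)` (with `dSeq N 0 = 1`), indices shifted to start at 0. -/
noncomputable def dSeq (N : ℕ → ℕ) : ℕ → ℝ := fun r => (∏ k ∈ Finset.range r, (N k : ℝ))⁻¹

/-- The Euclidean norm on the plane `ℝ × ℝ`. -/
noncomputable def eNorm (v : ℝ × ℝ) : ℝ := Real.sqrt (v.1 ^ 2 + v.2 ^ 2)

/-- The set `W_i`: the complement of the union, over all levels `r` and all centres `c` in the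
lattice `C_r = d_{r-1}((1/2,1/2)+ℤ²)`, of the open squares of side `i_r d_r` centred at `c`. -/
def Wset (N : ℕ → ℕ) (i : ℕ → ℝ) : Set (ℝ × ℝ) :=
  {x | ∀ r : ℕ, ∀ z : ℤ × ℤ,
    ¬ (|x.1 - dSeq N r * (1 / 2 + (z.1 : ℝ))| < i r * dSeq N (r + 1) / 2 ∧
       |x.2 - dSeq N r * (1 / 2 + (z.2 : ℝ))| < i r * dSeq N (r + 1) / 2)}

/-!
`W_i` is closed, being the complement of a union of open squares.

For the measure, fix a grid cell `Q` of side `d_m` and put `q_r = i_r / N_r ≥ 1 / N_r`. For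
`r ≥ m` the level-`r` squares meet `Q` in a set `A_r` of measure `q_r² |Q|`, and the levels are
quasi-independent: for `r < s` the level-`s` grid is finer than the level-`r` squares, so
`|A_r ∩ A_s| ≤ 9 q_r² q_s² |Q|`. As `∑ q_r² = ∞`, some finite block of levels has
`∑ q_r² ≥ 1`, and the Chung–Erdős inequality then shows that these levels remove at least
`|Q| / 10` from `Q`. Hence `W_i` has density at most `39/40` in every ball of radius `d_m`, and
the Lebesgue density theorem forces `|W_i| = 0`.
-/

open MeasureTheory Set Metric
open scoped ENNReal Topology

section SecondMoment

variable {α ι : Type*} [MeasurableSpace α] (μ : Measure α)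

theorem sq_lintegral_le_measure_mul_lintegral_sq {f : α → ℝ≥0∞} (hf : AEMeasurable f μ)
    {U : Set α} (hfU : Function.support f ⊆ U) :
    (∫⁻ x, f x ∂μ) ^ 2 ≤ μ U * ∫⁻ x, f x ^ 2 ∂μ := by
  have hHolder := ENNReal.lintegral_mul_le_Lp_mul_Lq (μ.restrict U) Real.HolderConjugate.two_two
    hf.restrict (aemeasurable_const (b := (1 : ℝ≥0∞)))
  simp only [Pi.mul_apply, mul_one, ENNReal.one_rpow, setLIntegral_one,
    setLIntegral_eq_of_support_subset hfU] at hHolder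
  calc (∫⁻ x, f x ∂μ) ^ 2
      ≤ ((∫⁻ x in U, f x ^ (2 : ℝ) ∂μ) ^ (1 / 2 : ℝ) * μ U ^ (1 / 2 : ℝ)) ^ 2 := by gcongr
    _ = μ U * ∫⁻ x in U, f x ^ 2 ∂μ := by
      rw [mul_pow, ← ENNReal.rpow_natCast, ← ENNReal.rpow_natCast (μ U ^ _), ← ENNReal.rpow_mul,
        ← ENNReal.rpow_mul]
      norm_num [mul_comm]
    _ ≤ μ U * ∫⁻ x, f x ^ 2 ∂μ := by gcongr; exact Measure.restrict_le_self

/-- The Chung–Erdős inequality. -/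
theorem sq_sum_measure_le_mul_measure_biUnion (F : Finset ι) {A : ι → Set α}
    (hA : ∀ r ∈ F, MeasurableSet (A r)) :
    (∑ r ∈ F, μ (A r)) ^ 2 ≤ μ (⋃ r ∈ F, A r) * ∑ r ∈ F, ∑ s ∈ F, μ (A r ∩ A s) := by
  set f : α → ℝ≥0∞ := fun x => ∑ r ∈ F, (A r).indicator 1 x
  have hf : Measurable f := Finset.measurable_sum _ fun r hr => measurable_one.indicator (hA r hr)
  have hfU : Function.support f ⊆ ⋃ r ∈ F, A r := by
    intro x hx
    obtain ⟨r, hr, hxr⟩ := Finset.exists_ne_zero_of_sum_ne_zero hx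
    exact mem_biUnion hr (Set.mem_of_indicator_ne_zero hxr)
  have hint : ∫⁻ x, f x ∂μ = ∑ r ∈ F, μ (A r) := by
    rw [lintegral_finsetSum _ fun r hr => measurable_one.indicator (hA r hr)]
    exact Finset.sum_congr rfl fun r hr => lintegral_indicator_one (hA r hr)
  have hint_sq : ∫⁻ x, f x ^ 2 ∂μ = ∑ r ∈ F, ∑ s ∈ F, μ (A r ∩ A s) := by
    have hsq : ∀ x, f x ^ 2 = ∑ r ∈ F, ∑ s ∈ F, (A r ∩ A s).indicator 1 x := fun x => by
      simp only [f, sq, Finset.sum_mul_sum, inter_indicator_one, Pi.mul_apply]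
    simp_rw [hsq]
    rw [lintegral_finsetSum _ fun r hr => Finset.measurable_sum _ fun s hs =>
      measurable_one.indicator ((hA r hr).inter (hA s hs))]
    refine Finset.sum_congr rfl fun r hr => ?_
    rw [lintegral_finsetSum _ fun s hs => measurable_one.indicator ((hA r hr).inter (hA s hs))]
    exact Finset.sum_congr rfl fun s hs => lintegral_indicator_one ((hA r hr).inter (hA s hs))
  rw [← hint, ← hint_sq]
  exact sq_lintegral_le_measure_mul_lintegral_sq μ hf.aemeasurable hfU


variable {F : Finset ι} {A : ι → Set α} {x : ι → ℝ} {V C : ℝ}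

theorem sum_sum_measure_inter_le (hx : ∀ r, 0 ≤ x r) (hV : 0 ≤ V) (hC : 0 ≤ C)
    (hdiag : ∀ r ∈ F, μ (A r) = ENNReal.ofReal (x r * V))
    (hoff : ∀ r ∈ F, ∀ s ∈ F, r ≠ s → μ (A r ∩ A s) ≤ ENNReal.ofReal (C * x r * x s * V)) :
    ∑ r ∈ F, ∑ s ∈ F, μ (A r ∩ A s)
      ≤ ENNReal.ofReal ((∑ r ∈ F, x r + C * (∑ r ∈ F, x r) ^ 2) * V) := by
  classical
  set b : ι → ι → ℝ := fun r s => (if r = s then x r * V else 0) + C * x r * x s * V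
  have hb : ∀ r s, 0 ≤ b r s := fun r s => by
    have := hx r; have := hx s; simp only [b]; split_ifs <;> positivity
  have hpair : ∀ r ∈ F, ∀ s ∈ F, μ (A r ∩ A s) ≤ ENNReal.ofReal (b r s) := by
    intro r hr s hs
    by_cases hrs : r = s
    · subst hrs
      rw [inter_self, hdiag r hr]
      refine ENNReal.ofReal_le_ofReal ?_
      simp only [b, ↓reduceIte]
      exact le_add_of_nonneg_right (by have := hx r; positivity)
    · simpa only [b, if_neg hrs, zero_add] using hoff r hr s hs hrs
  have hrow : ∀ r ∈ F, ∑ s ∈ F, b r s = x r * V + C * x r * (∑ s ∈ F, x s) * V := fun r hr => by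
    rw [Finset.sum_add_distrib, Finset.sum_ite_eq, if_pos hr, Finset.mul_sum, Finset.sum_mul]
  calc ∑ r ∈ F, ∑ s ∈ F, μ (A r ∩ A s)
      ≤ ∑ r ∈ F, ∑ s ∈ F, ENNReal.ofReal (b r s) :=
        Finset.sum_le_sum fun r hr => Finset.sum_le_sum fun s hs => hpair r hr s hs
    _ = ENNReal.ofReal (∑ r ∈ F, ∑ s ∈ F, b r s) := by
      simp_rw [← ENNReal.ofReal_sum_of_nonneg fun s _ => hb _ s,
        ← ENNReal.ofReal_sum_of_nonneg fun r _ => Finset.sum_nonneg fun s _ => hb r s]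
    _ = _ := by
      rw [Finset.sum_congr rfl hrow, Finset.sum_add_distrib, ← Finset.sum_mul, ← Finset.sum_mul,
        ← Finset.sum_mul, ← Finset.mul_sum]
      ring_nf

theorem le_measure_biUnion_of_measure_inter_le (hA : ∀ r ∈ F, MeasurableSet (A r))
    (hx : ∀ r, 0 ≤ x r) (hV : 0 ≤ V) (hC : 0 ≤ C)
    (hdiag : ∀ r ∈ F, μ (A r) = ENNReal.ofReal (x r * V))
    (hoff : ∀ r ∈ F, ∀ s ∈ F, r ≠ s → μ (A r ∩ A s) ≤ ENNReal.ofReal (C * x r * x s * V)) :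
    ENNReal.ofReal ((∑ r ∈ F, x r) * V / (1 + C * ∑ r ∈ F, x r)) ≤ μ (⋃ r ∈ F, A r) := by
  set T := ∑ r ∈ F, x r
  have hT : 0 ≤ T := Finset.sum_nonneg fun r _ => hx r
  have hsum : ∑ r ∈ F, μ (A r) = ENNReal.ofReal (T * V) := by
    rw [Finset.sum_congr rfl hdiag, ← ENNReal.ofReal_sum_of_nonneg fun r _ => by
      have := hx r; positivity, Finset.sum_mul]
  have hCE := (sq_sum_measure_le_mul_measure_biUnion μ F hA).trans
    (mul_le_mul_right (sum_sum_measure_inter_le μ hx hV hC hdiag hoff) _)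
  rw [hsum] at hCE
  rcases (mul_nonneg hT hV).eq_or_lt with hTV | hTV
  · rw [← hTV, zero_div, ENNReal.ofReal_zero]
    exact zero_le
  have hD : 0 < (T + C * T ^ 2) * V := by
    rw [show (T + C * T ^ 2) * V = T * V * (1 + C * T) by ring]
    exact mul_pos hTV (by positivity)
  rw [← ENNReal.mul_le_mul_iff_left (ENNReal.ofReal_pos.2 hD).ne' ENNReal.ofReal_ne_top,
    ← ENNReal.ofReal_mul (by positivity)]
  refine le_of_eq_of_le ?_ hCE
  rw [← ENNReal.ofReal_pow hTV.le]
  congr 1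
  field_simp

end SecondMoment

theorem exists_le_sum_Ico_of_not_summable {f : ℕ → ℝ} (hf : ∀ n, 0 ≤ f n) (h : ¬Summable f)
    (m : ℕ) (c : ℝ) : ∃ R, c ≤ ∑ r ∈ Finset.Ico m R, f r := by
  have htail : ¬Summable fun n => f (n + m) := (summable_nat_add_iff m).not.2 h
  obtain ⟨k, hk⟩ := ((not_summable_iff_tendsto_nat_atTop_of_nonneg fun n => hf (n + m)).1
    htail).eventually_ge_atTop c |>.exists
  refine ⟨m + k, ?_⟩
  simpa [Finset.sum_Ico_eq_sum_range, add_comm m] using hk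

theorem measure_eq_zero_of_forall_measure_inter_closedBall_le {β : Type*} [MetricSpace β]
    [MeasurableSpace β] [BorelSpace β] [SecondCountableTopology β] [HasBesicovitchCovering β]
    (μ : Measure β) [IsLocallyFiniteMeasure μ] (S : Set β) {ρ : ℕ → ℝ}
    (hρ : Tendsto ρ atTop (𝓝[>] 0)) {δ : ℝ≥0∞} (hδ : δ < 1)
    (h : ∀ x m, μ (S ∩ closedBall x (ρ m)) ≤ δ * μ (closedBall x (ρ m))) : μ S = 0 := by
  by_contra hS
  have : (ae (μ.restrict S)).NeBot := ae_neBot.2 (by simpa [Measure.restrict_eq_zero] using hS)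
  obtain ⟨x, hx⟩ := (Besicovitch.ae_tendsto_measure_inter_div μ S).exists
  have h1 : 1 ≤ δ := le_of_tendsto' (hx.comp hρ) fun m => ENNReal.div_le_of_le_mul (h x m)
  exact (h1.trans_lt hδ).false

def gridCell (p : ℝ) (k : ℤ) : Set ℝ := Ico (p * k) (p * (k + 1))

def band (p w : ℝ) : Set ℝ := {t | ∃ z : ℤ, |t - p * (1 / 2 + z)| < w / 2}

section Grid

variable {p : ℝ}

theorem mem_gridCell_floor (hp : 0 < p) (t : ℝ) : t ∈ gridCell p ⌊t / p⌋ := by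
  constructor
  · calc p * ⌊t / p⌋ ≤ p * (t / p) := by gcongr; exact Int.floor_le _
      _ = t := mul_div_cancel₀ t hp.ne'
  · calc t = p * (t / p) := (mul_div_cancel₀ t hp.ne').symm
      _ < p * (⌊t / p⌋ + 1) := by gcongr; exact Int.lt_floor_add_one _

theorem dist_le_of_mem_gridCell {k : ℤ} {s t : ℝ} (hs : s ∈ gridCell p k)
    (ht : t ∈ gridCell p k) : dist s t ≤ p := by
  simp only [gridCell, mem_Ico] at hs ht
  rw [Real.dist_eq, abs_le]
  constructor <;> linarith

theorem gridCell_natCast_mul (K : ℕ) (k : ℤ) :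
    gridCell (K * p) k = Ico (p * ↑(K * k)) (p * (↑(K * k) + K)) := by
  simp only [gridCell]
  congr 1 <;> push_cast <;> ring

theorem measurableSet_gridCell (p : ℝ) (k : ℤ) : MeasurableSet (gridCell p k) :=
  measurableSet_Ico

theorem volume_inter_Ico_eq_sum {S : Set ℝ} (hS : MeasurableSet S) (hp : 0 ≤ p) (z : ℤ)
    (n : ℕ) : volume (S ∩ Ico (p * z) (p * (z + n)))
      = ∑ k ∈ Finset.range n, volume (S ∩ gridCell p (z + k)) := by
  induction n with
  | zero => simp
  | succ n ih =>
    have hsplit : Ico (p * z) (p * (z + ↑(n + 1)))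
        = Ico (p * z) (p * (z + n)) ∪ gridCell p (z + n) := by
      have hn : (0 : ℝ) ≤ n := n.cast_nonneg
      rw [gridCell, Int.cast_add, Int.cast_natCast, Ico_union_Ico_eq_Ico (by nlinarith)
        (by nlinarith), Nat.cast_succ, add_assoc]
    have hdisj : Disjoint (S ∩ Ico (p * z) (p * (z + n))) (S ∩ gridCell p (z + n)) := by
      refine Disjoint.mono inter_subset_right inter_subset_right ?_
      rw [gridCell, Int.cast_add, Int.cast_natCast]
      exact Ico_disjoint_Ico_same
    rw [hsplit, inter_union_distrib_left,
      measure_union hdisj (hS.inter (measurableSet_gridCell _ _)), ih, Finset.sum_range_succ]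

theorem isOpen_band (p w : ℝ) : IsOpen (band p w) := by
  have : band p w = ⋃ z : ℤ, ball (p * (1 / 2 + z)) (w / 2) := by
    ext t
    simp [band, Real.dist_eq]
  rw [this]
  exact isOpen_iUnion fun z => isOpen_ball

variable {w : ℝ}

theorem band_inter_gridCell (hp : 0 < p) (hwp : w ≤ p) (k : ℤ) :
    band p w ∩ gridCell p k = Ioo (p * (1 / 2 + k) - w / 2) (p * (1 / 2 + k) + w / 2) := by
  ext t
  simp only [band, gridCell, mem_inter_iff, mem_ofPred_eq, mem_Ico, mem_Ioo, abs_lt]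
  constructor
  · rintro ⟨⟨z, hz₁, hz₂⟩, hk₁, hk₂⟩
    suffices z = k by subst this; constructor <;> linarith
    have h₁ : p * k < p * (z + 1) := by linarith
    have h₂ : p * z < p * (k + 1) := by linarith
    have h₁' : k < z + 1 := by exact_mod_cast lt_of_mul_lt_mul_left h₁ hp.le
    have h₂' : z < k + 1 := by exact_mod_cast lt_of_mul_lt_mul_left h₂ hp.le
    omega
  · rintro ⟨h₁, h₂⟩
    exact ⟨⟨k, by linarith, by linarith⟩, by linarith, by linarith⟩

theorem volume_band_inter_gridCell (hp : 0 < p) (hwp : w ≤ p) (k : ℤ) :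
    volume (band p w ∩ gridCell p k) = ENNReal.ofReal w := by
  rw [band_inter_gridCell hp hwp, Real.volume_Ioo]
  ring_nf

theorem volume_band_inter_Ico (hp : 0 < p) (hwp : w ≤ p) (z : ℤ) (n : ℕ) :
    volume (band p w ∩ Ico (p * z) (p * (z + n))) = n * ENNReal.ofReal w := by
  simp [volume_inter_Ico_eq_sum (isOpen_band p w).measurableSet hp.le,
    volume_band_inter_gridCell hp hwp]

theorem volume_band_inter_gridCell_natCast_mul (hp : 0 < p) (hwp : w ≤ p) (K : ℕ)
    (k : ℤ) : volume (band p w ∩ gridCell (K * p) k) = ENNReal.ofReal (K * w) := by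
  rw [gridCell_natCast_mul, volume_band_inter_Ico hp hwp, ENNReal.ofReal_mul K.cast_nonneg,
    ENNReal.ofReal_natCast]

theorem volume_band_inter_Ioo_le (hp : 0 < p) (hw : 0 ≤ w) (hwp : w ≤ p) {a b : ℝ} (hab : a ≤ b) :
    volume (band p w ∩ Ioo a b) ≤ ENNReal.ofReal (w / p * (b - a) + 2 * w) := by
  set n := ⌈(b - a) / p⌉₊ + 1
  have hn : (n : ℝ) ≤ (b - a) / p + 2 := by
    have := Nat.ceil_lt_add_one (div_nonneg (sub_nonneg.2 hab) hp.le)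
    push_cast [n]; linarith
  have hcover : Ioo a b ⊆ Ico (p * ⌊a / p⌋) (p * (⌊a / p⌋ + n)) := by
    have ha := mem_gridCell_floor hp a
    have hb : b - a ≤ p * ⌈(b - a) / p⌉₊ := by
      rw [← div_le_iff₀' hp]
      exact Nat.le_ceil _
    intro t ht
    simp only [gridCell, mem_Ico] at ha
    push_cast [n]
    constructor <;> nlinarith [ht.1, ht.2]
  calc volume (band p w ∩ Ioo a b)
      ≤ volume (band p w ∩ Ico (p * ⌊a / p⌋) (p * (⌊a / p⌋ + n))) := by gcongr
    _ = ENNReal.ofReal (n * w) := by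
      rw [volume_band_inter_Ico hp hwp, ENNReal.ofReal_mul n.cast_nonneg, ENNReal.ofReal_natCast]
    _ ≤ ENNReal.ofReal (w / p * (b - a) + 2 * w) := by
      gcongr
      calc n * w ≤ ((b - a) / p + 2) * w := by gcongr
        _ = w / p * (b - a) + 2 * w := by ring

theorem volume_band_inter_band_inter_gridCell_natCast_mul_le (hp : 0 < p) (hw : 0 ≤ w)
    (hwp : w ≤ p) {p' w' : ℝ} (hp' : 0 < p') (hw' : 0 ≤ w') (hwp' : w' ≤ p') (K : ℕ) (k : ℤ) :
    volume (band p w ∩ band p' w' ∩ gridCell (K * p) k)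
      ≤ ENNReal.ofReal (K * (w' / p' * w + 2 * w')) := by
  have hcell : ∀ j : ℤ, volume (band p w ∩ band p' w' ∩ gridCell p j)
      ≤ ENNReal.ofReal (w' / p' * w + 2 * w') := fun j => by
    rw [inter_right_comm, band_inter_gridCell hp hwp, inter_comm]
    convert volume_band_inter_Ioo_le hp' hw' hwp'
      (a := p * (1 / 2 + j) - w / 2) (b := p * (1 / 2 + j) + w / 2) (by linarith) using 3
    ring
  rw [gridCell_natCast_mul, volume_inter_Ico_eq_sum
      (((isOpen_band p w).inter (isOpen_band p' w')).measurableSet) hp.le,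
    ENNReal.ofReal_mul K.cast_nonneg, ENNReal.ofReal_natCast]
  simpa using Finset.sum_le_card_nsmul (Finset.range K) _ _ fun j _ => hcell _

end Grid

section Scales

variable {N : ℕ → ℕ}

theorem dSeq_pos (hN : ∀ r, 0 < N r) (r : ℕ) : 0 < dSeq N r :=
  inv_pos.2 (Finset.prod_pos fun k _ => Nat.cast_pos.2 (hN k))

theorem dSeq_eq_natCast_prod_mul (hN : ∀ r, 0 < N r) {m r : ℕ} (h : m ≤ r) :
    dSeq N m = ((∏ k ∈ Finset.Ico m r, N k : ℕ) : ℝ) * dSeq N r := by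
  have hprod : ∀ s : Finset ℕ, (∏ k ∈ s, (N k : ℝ)) ≠ 0 := fun s =>
    Finset.prod_ne_zero_iff.2 fun k _ => Nat.cast_ne_zero.2 (hN k).ne'
  rw [dSeq, dSeq, ← Finset.prod_range_mul_prod_Ico _ h, Nat.cast_prod]
  field_simp [hprod]

theorem natCast_mul_dSeq_succ (hN : ∀ r, 0 < N r) (r : ℕ) :
    (N r : ℝ) * dSeq N (r + 1) = dSeq N r := by
  simpa using (dSeq_eq_natCast_prod_mul hN r.le_succ).symm

theorem dSeq_antitone (hN : ∀ r, 0 < N r) : Antitone (dSeq N) := fun m r h => by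
  rw [dSeq_eq_natCast_prod_mul hN h]
  refine le_mul_of_one_le_left (dSeq_pos hN r).le ?_
  exact_mod_cast Finset.prod_pos fun k _ => hN k

theorem tendsto_dSeq (hN : ∀ r, 1 < N r) : Tendsto (dSeq N) atTop (𝓝[>] 0) := by
  have hle : ∀ r, dSeq N r ≤ (1 / 2) ^ r := fun r => by
    rw [dSeq, one_div, inv_pow]
    refine inv_anti₀ (by positivity) ?_
    calc (2 : ℝ) ^ r = ∏ _k ∈ Finset.range r, (2 : ℝ) := by simp
      _ ≤ ∏ k ∈ Finset.range r, (N k : ℝ) :=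
        Finset.prod_le_prod (fun _ _ => by norm_num) fun k _ => by exact_mod_cast hN k
  refine tendsto_nhdsWithin_iff.2 ⟨squeeze_zero (fun r => (dSeq_pos (fun k => (hN k).pos) r).le) hle
    (tendsto_pow_atTop_nhds_zero_of_lt_one (by norm_num) (by norm_num)),
    Eventually.of_forall (dSeq_pos fun k => (hN k).pos)⟩

end Scales

def levelBand (N : ℕ → ℕ) (i : ℕ → ℝ) (r : ℕ) : Set ℝ := band (dSeq N r) (i r * dSeq N (r + 1))

theorem Wset_eq_compl_iUnion (N : ℕ → ℕ) (i : ℕ → ℝ) :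
    Wset N i = (⋃ r, levelBand N i r ×ˢ levelBand N i r)ᶜ := by
  ext x
  simp only [Wset, levelBand, band, mem_compl_iff, mem_iUnion, mem_prod, mem_ofPred_eq,
    not_exists]
  constructor
  · rintro h r ⟨⟨a, ha⟩, ⟨b, hb⟩⟩
    exact h r (a, b) ⟨ha, hb⟩
  · rintro h r z ⟨ha, hb⟩
    exact h r ⟨⟨z.1, ha⟩, ⟨z.2, hb⟩⟩

theorem isClosed_Wset (N : ℕ → ℕ) (i : ℕ → ℝ) : IsClosed (Wset N i) := by
  rw [Wset_eq_compl_iUnion]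
  exact (isOpen_iUnion fun r => (isOpen_band _ _).prod (isOpen_band _ _)).isClosed_compl

section Level

variable {N : ℕ → ℕ} {i : ℕ → ℝ} (hi : ∀ r, 1 ≤ i r ∧ i r < N r)
include hi

theorem one_lt_N (r : ℕ) : 1 < N r := by
  exact_mod_cast (hi r).1.trans_lt (hi r).2

theorem N_pos (r : ℕ) : 0 < N r := (one_lt_N hi r).pos

theorem div_natCast_nonneg (r : ℕ) : 0 ≤ i r / N r :=
  div_nonneg (zero_le_one.trans (hi r).1) (N r).cast_nonneg

theorem mul_dSeq_succ_eq (r : ℕ) : i r * dSeq N (r + 1) = i r / N r * dSeq N r := by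
  rw [← natCast_mul_dSeq_succ (N_pos hi) r]
  field_simp [(Nat.cast_pos.2 (N_pos hi r)).ne']

theorem mul_dSeq_succ_nonneg (r : ℕ) : 0 ≤ i r * dSeq N (r + 1) :=
  mul_nonneg (zero_le_one.trans (hi r).1) (dSeq_pos (N_pos hi) _).le

theorem mul_dSeq_succ_le (r : ℕ) : i r * dSeq N (r + 1) ≤ dSeq N r := by
  rw [← natCast_mul_dSeq_succ (N_pos hi) r]
  exact mul_le_mul_of_nonneg_right (hi r).2.le (dSeq_pos (N_pos hi) _).le

theorem volume_levelBand_inter_gridCell {m r : ℕ} (hmr : m ≤ r) (a : ℤ) :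
    volume (levelBand N i r ∩ gridCell (dSeq N m) a) = ENNReal.ofReal (i r / N r * dSeq N m) := by
  rw [dSeq_eq_natCast_prod_mul (N_pos hi) hmr, levelBand,
    volume_band_inter_gridCell_natCast_mul (dSeq_pos (N_pos hi) r)
      (mul_dSeq_succ_le hi r), mul_dSeq_succ_eq hi]
  ring_nf

theorem volume_levelBand_inter_levelBand_inter_gridCell_le {m r s : ℕ} (hmr : m ≤ r) (hrs : r < s)
    (a : ℤ) : volume (levelBand N i r ∩ levelBand N i s ∩ gridCell (dSeq N m) a)
      ≤ ENNReal.ofReal (3 * (i r / N r) * (i s / N s) * dSeq N m) := by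
  have hN := N_pos hi
  have hfine : i s * dSeq N (s + 1) ≤ i s / N s * (i r * dSeq N (r + 1)) := by
    rw [mul_dSeq_succ_eq hi s]
    refine mul_le_mul_of_nonneg_left ?_ (div_natCast_nonneg hi s)
    exact (dSeq_antitone hN hrs).trans (le_mul_of_one_le_left (dSeq_pos hN _).le (hi r).1)
  rw [dSeq_eq_natCast_prod_mul hN hmr, levelBand, levelBand]
  refine (volume_band_inter_band_inter_gridCell_natCast_mul_le (dSeq_pos hN r)
    (mul_dSeq_succ_nonneg hi r) (mul_dSeq_succ_le hi r) (dSeq_pos hN s) (mul_dSeq_succ_nonneg hi s)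
    (mul_dSeq_succ_le hi s) _ a).trans (ENNReal.ofReal_le_ofReal ?_)
  have hratio : i s * dSeq N (s + 1) / dSeq N s = i s / N s := by
    rw [mul_dSeq_succ_eq hi s, mul_div_cancel_right₀ _ (dSeq_pos hN s).ne']
  calc _ ≤ (∏ k ∈ Finset.Ico m r, N k : ℕ) * (3 * (i s / N s) * (i r * dSeq N (r + 1))) := by
        rw [hratio]; gcongr; linarith
    _ = _ := by rw [mul_dSeq_succ_eq hi r]; ring

theorem volume_levelBand_prod_inter_gridCell_prod {m r : ℕ} (hmr : m ≤ r) (a b : ℤ) :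
    volume (levelBand N i r ×ˢ levelBand N i r ∩ gridCell (dSeq N m) a ×ˢ gridCell (dSeq N m) b)
      = ENNReal.ofReal ((i r / N r) ^ 2 * dSeq N m ^ 2) := by
  have hq : 0 ≤ i r / N r * dSeq N m :=
    mul_nonneg (div_natCast_nonneg hi r) (dSeq_pos (N_pos hi) m).le
  rw [prod_inter_prod, Measure.volume_eq_prod, Measure.prod_prod,
    volume_levelBand_inter_gridCell hi hmr, volume_levelBand_inter_gridCell hi hmr,
    ← ENNReal.ofReal_mul hq]
  ring_nf

theorem volume_levelBand_prod_inter_levelBand_prod_le {m r s : ℕ} (hmr : m ≤ r)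
    (hms : m ≤ s) (hrs : r ≠ s) (a b : ℤ) :
    volume ((levelBand N i r ×ˢ levelBand N i r ∩ gridCell (dSeq N m) a ×ˢ gridCell (dSeq N m) b)
      ∩ (levelBand N i s ×ˢ levelBand N i s ∩ gridCell (dSeq N m) a ×ˢ gridCell (dSeq N m) b))
      ≤ ENNReal.ofReal (9 * (i r / N r) ^ 2 * (i s / N s) ^ 2 * dSeq N m ^ 2) := by
  wlog hlt : r < s generalizing r s
  · rw [inter_comm]
    convert this hms hmr hrs.symm (hrs.symm.lt_of_le (not_lt.1 hlt)) using 2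
    ring
  rw [← inter_inter_distrib_right, prod_inter_prod, prod_inter_prod, Measure.volume_eq_prod,
    Measure.prod_prod]
  calc _ ≤ ENNReal.ofReal (3 * (i r / N r) * (i s / N s) * dSeq N m)
        * ENNReal.ofReal (3 * (i r / N r) * (i s / N s) * dSeq N m) := by
        gcongr <;> exact volume_levelBand_inter_levelBand_inter_gridCell_le hi hmr hlt _
    _ = _ := by
      have := div_natCast_nonneg hi r
      have := div_natCast_nonneg hi s
      have := dSeq_pos (N_pos hi) m
      rw [← ENNReal.ofReal_mul (by positivity)]
      ring_nf

theorem not_summable_sq_div (hdiv : ¬Summable fun r => 1 / (N r : ℝ) ^ 2) :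
    ¬Summable fun r => (i r / N r) ^ 2 := fun h => hdiv <|
  h.of_nonneg_of_le (fun r => by positivity) fun r => by
    rw [div_pow]
    exact div_le_div_of_nonneg_right (one_le_pow₀ (hi r).1) (by positivity)

theorem le_volume_compl_Wset_inter_gridCell_prod (hdiv : ¬Summable fun r => 1 / (N r : ℝ) ^ 2)
    (m : ℕ) (a b : ℤ) : ENNReal.ofReal (dSeq N m ^ 2 / 10)
      ≤ volume ((Wset N i)ᶜ ∩ gridCell (dSeq N m) a ×ˢ gridCell (dSeq N m) b) := by
  classical
  set Q := gridCell (dSeq N m) a ×ˢ gridCell (dSeq N m) b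
  obtain ⟨R, hR⟩ := exists_le_sum_Ico_of_not_summable (fun r => sq_nonneg (i r / N r))
    (not_summable_sq_div hi hdiv) m 1
  set T := ∑ r ∈ Finset.Ico m R, (i r / N r) ^ 2
  have hmeas : ∀ r, MeasurableSet (levelBand N i r ×ˢ levelBand N i r ∩ Q) := fun r =>
    (((isOpen_band _ _).prod (isOpen_band _ _)).measurableSet).inter
      ((measurableSet_gridCell _ _).prod (measurableSet_gridCell _ _))
  have hunion := le_measure_biUnion_of_measure_inter_le volume (F := Finset.Ico m R)
    (fun r _ => hmeas r) (fun r => sq_nonneg (i r / N r)) (sq_nonneg (dSeq N m))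
    (by norm_num : (0 : ℝ) ≤ 9)
    (fun r hr => volume_levelBand_prod_inter_gridCell_prod hi (Finset.mem_Ico.1 hr).1 a b)
    (fun r hr s hs hrs => volume_levelBand_prod_inter_levelBand_prod_le hi
      (Finset.mem_Ico.1 hr).1 (Finset.mem_Ico.1 hs).1 hrs a b)
  refine le_trans ?_ (hunion.trans (measure_mono ?_))
  · refine ENNReal.ofReal_le_ofReal ?_
    rw [div_le_div_iff₀ (by norm_num) (by positivity)]
    nlinarith [sq_nonneg (dSeq N m)]
  · rw [Wset_eq_compl_iUnion, compl_compl]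
    exact iUnion₂_subset fun r _ => inter_subset_inter_left _ (subset_iUnion_of_subset r le_rfl)

theorem volume_Wset_inter_closedBall_le (hdiv : ¬Summable fun r => 1 / (N r : ℝ) ^ 2)
    (x : ℝ × ℝ) (m : ℕ) : volume (Wset N i ∩ closedBall x (dSeq N m))
      ≤ ENNReal.ofReal (39 / 40) * volume (closedBall x (dSeq N m)) := by
  set ρ := dSeq N m
  have hρ : 0 < ρ := dSeq_pos (N_pos hi) m
  set Q := gridCell ρ ⌊x.1 / ρ⌋ ×ˢ gridCell ρ ⌊x.2 / ρ⌋
  have hQ : Q ⊆ closedBall x ρ := fun y hy => by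
    rw [mem_closedBall, Prod.dist_eq]
    exact max_le (dist_le_of_mem_gridCell hy.1 (mem_gridCell_floor hρ x.1))
      (dist_le_of_mem_gridCell hy.2 (mem_gridCell_floor hρ x.2))
  have hball : volume (closedBall x ρ) = ENNReal.ofReal (4 * ρ ^ 2) := by
    rw [← closedBall_prod_same, Measure.volume_eq_prod, Measure.prod_prod, Real.volume_closedBall,
      Real.volume_closedBall, ← ENNReal.ofReal_mul (by positivity)]
    ring_nf
  have hsplit : volume (Wset N i ∩ closedBall x ρ) + volume ((Wset N i)ᶜ ∩ Q)
      ≤ volume (closedBall x ρ) := by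
    rw [← measure_union (disjoint_compl_right.mono inter_subset_left inter_subset_left)
      ((isClosed_Wset N i).measurableSet.compl.inter
        ((measurableSet_gridCell _ _).prod (measurableSet_gridCell _ _)))]
    exact measure_mono (union_subset inter_subset_right (inter_subset_right.trans hQ))
  have hsum : ENNReal.ofReal (39 / 40) * volume (closedBall x ρ) + ENNReal.ofReal (ρ ^ 2 / 10)
      = volume (closedBall x ρ) := by
    rw [hball, ← ENNReal.ofReal_mul (by norm_num), ← ENNReal.ofReal_add (by positivity)
      (by positivity)]
    ring_nf
  refine (ENNReal.add_le_add_iff_right (ENNReal.ofReal_ne_top (r := ρ ^ 2 / 10))).1 ?_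
  calc _ ≤ volume (Wset N i ∩ closedBall x ρ) + volume ((Wset N i)ᶜ ∩ Q) :=
        add_le_add le_rfl (le_volume_compl_Wset_inter_gridCell_prod hi hdiv m _ _)
    _ ≤ volume (closedBall x ρ) := hsplit
    _ = _ := hsum.symm

theorem volume_Wset_eq_zero (hdiv : ¬Summable fun r => 1 / (N r : ℝ) ^ 2) : volume (Wset N i) = 0 :=
  measure_eq_zero_of_forall_measure_inter_closedBall_le volume (Wset N i)
    (tendsto_dSeq (one_lt_N hi)) (ENNReal.ofReal_lt_one.2 (by norm_num))
    (volume_Wset_inter_closedBall_le hi hdiv)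

end Level

theorem stmt4_general (N : ℕ → ℕ)
    (hdiv : ¬ Summable (fun r => 1 / (N r : ℝ) ^ 2))
    (i : ℕ → ℝ) (hi : SSeq N i) :
    IsClosed (Wset N i) ∧ MeasureTheory.volume (Wset N i) = 0 :=
  ⟨isClosed_Wset N i, volume_Wset_eq_zero hi.1 hdiv⟩

theorem stmt4 (N : ℕ → ℕ) (hN : ∀ r, 1 < N r)
    (hNtend : Filter.Tendsto (fun r => (N r : ℝ)) Filter.atTop Filter.atTop)
    (hdiv : ¬ Summable (fun r => 1 / (N r : ℝ) ^ 2))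
    (i : ℕ → ℝ) (hi : SSeq N i) :
    IsClosed (Wset N i) ∧ MeasureTheory.volume (Wset N i) = 0 :=
  stmt4_general N hdiv i hi
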